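/- arXiv:1104.2784 — 4 statements merged into one kernel-verified Lean document; each statement's English description precedes it below -/
import Mathlib

section
/- For every ν ≥ 1 there exists a real constant C_ν > 0 such that for every h = (h_0, …, h_ν) ∈ ℂ^{ν+1} for which the autocorrelation coefficients c_k = Σ_{m=0}^{ν−k} h_m · conj(h_{m+k}), k = 1, …, ν, are not all zero, the Lebesgue measure of the set D(h) = { u ∈ [−π, π] : |H(e^{−ju})|² > ‖h‖² } satisfies |D(h)| ≥ C_ν. (One may take C_ν = C·(2(2ν+1)³)^{−1/2} where C is the absolute constant in the McGehee–Pigno–Smith L¹ lower bound for exponential sums.) -/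
/-!
Write `f(u) = |H(e^{-ju})|² - ‖h‖²`. Expanding the square, `f` is the real trigonometric polynomial
`∑_{k=1}^{ν} (c_k e^{jku} + conj c_k e^{-jku})`, so `∫ f = 0`, the `k`-th Fourier coefficient of `f`
is `c_k`, and `|f| ≤ 2 ∑ |c_k|`. Mean zero gives `∫ |f| = 2 ∫ f⁺ ≤ 2 sup |f| · |D(h)|`, while
`∫ |f| ≥ 2π |c_k|` for every `k`. Choosing `k` with `|c_k|` maximal, `sup |f| ≤ 2ν |c_k|`, hence
`|D(h)| ≥ π / (2ν)`.
-/

open MeasureTheory Finset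

noncomputable def Hf (ν : ℕ) (h : ℕ → ℂ) (u : ℝ) : ℂ :=
  ∑ m ∈ Finset.range (ν + 1), h m * Complex.exp (-(Complex.I * m * u))

noncomputable def norm2 (ν : ℕ) (h : ℕ → ℂ) : ℝ :=
  ∑ m ∈ Finset.range (ν + 1), ‖h m‖ ^ 2

noncomputable def ac (ν : ℕ) (h : ℕ → ℂ) (k : ℕ) : ℂ :=
  ∑ m ∈ Finset.range (ν + 1 - k), h m * (starRingEnd ℂ) (h (m + k))

def Dset (ν : ℕ) (h : ℕ → ℂ) : Set ℝ :=
  {u | u ∈ Set.Icc (-Real.pi) Real.pi ∧ norm2 ν h < ‖Hf ν h u‖ ^ 2}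

section DoubleSum

variable {M : Type*} [AddCommMonoid M]

theorem sum_range_sum_Ioc_eq_sum_Icc_sum_range (N : ℕ) (F : ℕ → ℕ → M) :
    ∑ m ∈ range (N + 1), ∑ n ∈ Ioc m N, F m n
      = ∑ k ∈ Icc 1 N, ∑ m ∈ range (N + 1 - k), F m (m + k) := by
  rw [sum_sigma', sum_sigma']
  refine sum_nbij' (fun p ↦ ⟨p.2 - p.1, p.1⟩) (fun q ↦ ⟨q.2, q.2 + q.1⟩) ?_ ?_ ?_ ?_ ?_ <;>
    rintro ⟨m, n⟩ <;> simp <;> grind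

theorem sum_range_sum_range_eq_sum_range_sum_Ioc (N : ℕ) (F : ℕ → ℕ → M) :
    ∑ m ∈ range (N + 1), ∑ n ∈ range m, F m n = ∑ n ∈ range (N + 1), ∑ m ∈ Ioc n N, F m n :=
  sum_comm' fun m n ↦ by simp; omega

theorem sum_range_eq_sum_range_add_add_sum_Ioc {N m : ℕ} (hm : m < N + 1) (f : ℕ → M) :
    ∑ n ∈ range (N + 1), f n = ∑ n ∈ range m, f n + f m + ∑ n ∈ Ioc m N, f n := by
  rw [← sum_range_add_sum_Ico f hm.le, sum_eq_sum_Ico_succ_bot hm, Ico_add_one_add_one_eq_Ioc,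
    add_assoc]

theorem sum_range_sum_range_eq_sum_diag_add (N : ℕ) (F : ℕ → ℕ → M) :
    ∑ m ∈ range (N + 1), ∑ n ∈ range (N + 1), F m n
      = ∑ m ∈ range (N + 1), F m m
        + ∑ k ∈ Icc 1 N, ∑ m ∈ range (N + 1 - k), (F m (m + k) + F (m + k) m) := by
  rw [sum_congr rfl fun m hm ↦ sum_range_eq_sum_range_add_add_sum_Ioc (mem_range.1 hm) (F m),
    sum_add_distrib, sum_add_distrib, sum_range_sum_range_eq_sum_range_sum_Ioc,
    sum_range_sum_Ioc_eq_sum_Icc_sum_range (F := fun n m ↦ F m n),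
    sum_range_sum_Ioc_eq_sum_Icc_sum_range]
  simp only [sum_add_distrib]
  abel

end DoubleSum

theorem integral_abs_le_of_integral_eq_zero {α : Type*} [MeasurableSpace α] {μ : Measure α}
    [IsFiniteMeasure μ] {f : α → ℝ} {M : ℝ} (hf : Measurable f) (hbound : ∀ x, |f x| ≤ M)
    (hmean : ∫ x, f x ∂μ = 0) : ∫ x, |f x| ∂μ ≤ 2 * M * μ.real {x | 0 < f x} := by
  have hint : Integrable f μ := .of_bound hf.aestronglyMeasurable M
    (.of_forall fun x ↦ (Real.norm_eq_abs _).trans_le (hbound x))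
  have hpos : MeasurableSet {x | 0 < f x} := measurableSet_lt measurable_const hf
  have habs : ∀ x, |f x| = 2 * max (f x) 0 - f x := fun x ↦ by
    rcases le_total (f x) 0 with h | h
    · rw [abs_of_nonpos h, max_eq_right h]; ring
    · rw [abs_of_nonneg h, max_eq_left h]; ring
  have hmax_le : ∀ x, max (f x) 0 ≤ {x | 0 < f x}.indicator (fun _ ↦ M) x := fun x ↦ by
    by_cases h : 0 < f x
    · simpa [h, h.le] using (le_abs_self _).trans (hbound x)
    · simp [h, le_of_not_gt h]
  calc ∫ x, |f x| ∂μ = 2 * ∫ x, max (f x) 0 ∂μ := by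
        simp_rw [habs]
        rw [integral_sub (hint.pos_part.const_mul 2) hint, hmean, sub_zero, integral_const_mul]
    _ ≤ 2 * ∫ x, {x | 0 < f x}.indicator (fun _ ↦ M) x ∂μ := by
        gcongr 2 * ?_
        exact integral_mono hint.pos_part ((integrable_const M).indicator hpos) hmax_le
    _ = 2 * M * μ.real {x | 0 < f x} := by
        rw [integral_indicator_const M hpos, smul_eq_mul]
        ring

open Complex Real ComplexConjugate

theorem integral_exp_int_mul (n : ℤ) :
    ∫ u in (-π)..π, exp (I * n * u) = if n = 0 then 2 * (π : ℂ) else 0 := by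
  split_ifs with hn
  · simp [hn]
    ring
  have hperiodic : exp (I * n * π) = exp (I * n * ↑(-π)) :=
    Complex.exp_eq_exp_iff_exists_int.2 ⟨n, by push_cast; ring⟩
  rw [integral_exp_mul_complex (by simp [hn]), hperiodic, sub_self, zero_div]

theorem integral_sum_exp_mul_exp (s : Finset ℕ) (hs : 0 ∉ s) (a b : ℕ → ℂ) (k₀ : ℕ) :
    ∫ u in (-π)..π, (∑ k ∈ s, (a k * exp (I * k * u) + b k * exp (-(I * k * u))))
        * exp (-(I * k₀ * u))
      = if k₀ ∈ s then 2 * π * a k₀ else 0 := by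
  have hterm : ∀ (k : ℕ) (u : ℝ),
      (a k * exp (I * k * u) + b k * exp (-(I * k * u))) * exp (-(I * k₀ * u))
        = a k * exp (I * ((k - k₀ : ℤ) : ℂ) * u) + b k * exp (I * ((-k - k₀ : ℤ) : ℂ) * u) := by
    intro k u
    simp only [add_mul, mul_assoc, ← Complex.exp_add]
    push_cast
    ring_nf
  have hint (c : ℂ) (n : ℤ) : IntervalIntegrable (fun u : ℝ ↦ c * exp (I * n * u)) volume (-π) π :=
    (by fun_prop : Continuous _).intervalIntegrable _ _
  simp_rw [sum_mul, hterm]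
  rw [intervalIntegral.integral_finsetSum fun k _ ↦ (hint _ _).add (hint _ _),
    ← sum_ite_eq' s k₀ (fun k ↦ 2 * π * a k)]
  simp_rw [intervalIntegral.integral_add (hint _ _) (hint _ _),
    intervalIntegral.integral_const_mul, integral_exp_int_mul]
  refine sum_congr rfl fun k hk ↦ ?_
  have hk0 : k ≠ 0 := ne_of_mem_of_not_mem hk hs
  have hdiff : (k : ℤ) - k₀ = 0 ↔ k = k₀ := by omega
  have hsum : ¬(-(k : ℤ) - k₀ = 0) := by omega
  simp only [hdiff, hsum, if_false, mul_zero, add_zero]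
  split_ifs <;> ring

/-- The function `f(h, ·)` of the statement. -/
noncomputable def excess (ν : ℕ) (h : ℕ → ℂ) (u : ℝ) : ℝ := ‖Hf ν h u‖ ^ 2 - norm2 ν h

theorem excess_eq_sum (ν : ℕ) (h : ℕ → ℂ) (u : ℝ) :
    (excess ν h u : ℂ) = ∑ k ∈ Icc 1 ν,
      (ac ν h k * exp (I * k * u) + conj (ac ν h k) * exp (-(I * k * u))) := by
  have hconj : conj (Hf ν h u) = ∑ n ∈ range (ν + 1), conj (h n) * exp (I * n * u) := by
    simp [Hf, map_sum, ← Complex.exp_conj]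
  have hexp (m k : ℕ) : exp (-(I * m * u)) * exp (I * ↑(m + k) * u) = exp (I * k * u) := by
    rw [← Complex.exp_add]; push_cast; ring_nf
  have hexp' (m k : ℕ) : exp (-(I * ↑(m + k) * u)) * exp (I * m * u) = exp (-(I * k * u)) := by
    rw [← Complex.exp_add]; push_cast; ring_nf
  have hdiag (m : ℕ) :
      h m * exp (-(I * m * u)) * (conj (h m) * exp (I * m * u)) = ((‖h m‖ ^ 2 : ℝ) : ℂ) := by
    rw [ofReal_pow, ← mul_conj', mul_mul_mul_comm, ← Complex.exp_add, neg_add_cancel,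
      Complex.exp_zero, mul_one]
  rw [excess, ofReal_sub, ofReal_pow, ← mul_conj', hconj, Hf, sum_mul_sum,
    sum_range_sum_range_eq_sum_diag_add, norm2, ofReal_sum]
  simp_rw [hdiag, add_sub_cancel_left]
  refine sum_congr rfl fun k _ ↦ ?_
  simp only [ac, sum_mul, map_sum, map_mul, conj_conj, ← sum_add_distrib]
  refine sum_congr rfl fun m _ ↦ ?_
  rw [mul_mul_mul_comm, hexp, mul_mul_mul_comm, hexp']
  ring

theorem continuous_excess (ν : ℕ) (h : ℕ → ℂ) : Continuous (excess ν h) := by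
  unfold excess Hf
  fun_prop

theorem abs_excess_le (ν : ℕ) (h : ℕ → ℂ) (u : ℝ) :
    |excess ν h u| ≤ 2 * ∑ k ∈ Icc 1 ν, ‖ac ν h k‖ := by
  rw [← Real.norm_eq_abs, ← norm_real, excess_eq_sum, mul_sum]
  refine (norm_sum_le _ _).trans (sum_le_sum fun k _ ↦ (norm_add_le _ _).trans_eq ?_)
  simp [norm_exp]
  ring

theorem integral_excess_mul_exp (ν : ℕ) (h : ℕ → ℂ) (k₀ : ℕ) :
    ∫ u in (-π)..π, (excess ν h u : ℂ) * exp (-(I * k₀ * u))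
      = if k₀ ∈ Icc 1 ν then 2 * π * ac ν h k₀ else 0 := by
  simp_rw [excess_eq_sum]
  exact integral_sum_exp_mul_exp _ (by simp) _ _ k₀

theorem Dset_eq (ν : ℕ) (h : ℕ → ℂ) : Dset ν h = {u | 0 < excess ν h u} ∩ Set.Icc (-π) π := by
  ext u
  simp [Dset, excess, and_comm]

theorem pi_mul_norm_ac_le (ν : ℕ) (h : ℕ → ℂ) {k : ℕ} (hk : k ∈ Icc 1 ν) :
    π * ‖ac ν h k‖ ≤ 2 * (∑ j ∈ Icc 1 ν, ‖ac ν h j‖) * (volume (Dset ν h)).toReal := by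
  have hcont := continuous_excess ν h
  have hIcc {E : Type} [NormedAddCommGroup E] [NormedSpace ℝ E] (g : ℝ → E) :
      ∫ u in Set.Icc (-π) π, g u = ∫ u in (-π)..π, g u := by
    rw [integral_Icc_eq_integral_Ioc, intervalIntegral.integral_of_le (by linarith [pi_pos])]
  have hmean : ∫ u in Set.Icc (-π) π, excess ν h u = 0 := by
    have h0 := integral_excess_mul_exp ν h 0
    simp only [CharP.cast_eq_zero, mul_zero, zero_mul, neg_zero, Complex.exp_zero, mul_one,
      intervalIntegral.integral_ofReal] at h0
    rw [hIcc]
    exact_mod_cast h0.trans (if_neg (by simp))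
  have hcoeff : 2 * π * ‖ac ν h k‖ ≤ ∫ u in Set.Icc (-π) π, |excess ν h u| :=
    calc 2 * π * ‖ac ν h k‖ = ‖∫ u in (-π)..π, (excess ν h u : ℂ) * exp (-(I * k * u))‖ := by
          rw [integral_excess_mul_exp, if_pos hk]
          simp [abs_of_pos pi_pos]
      _ ≤ ∫ u in (-π)..π, ‖(excess ν h u : ℂ) * exp (-(I * k * u))‖ :=
          intervalIntegral.norm_integral_le_integral_norm (by linarith [pi_pos])
      _ = ∫ u in Set.Icc (-π) π, |excess ν h u| := by
          simp [hIcc, norm_exp]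
  have hD := integral_abs_le_of_integral_eq_zero hcont.measurable (abs_excess_le ν h) hmean
  rw [measureReal_restrict_apply (measurableSet_lt measurable_const hcont.measurable), ← Dset_eq,
    measureReal_def] at hD
  linarith

/-- **Lemma 1**: for every `ν ≥ 1` there is a constant `C_ν > 0` such that for every CIR
realization `h ∈ ℂ^{ν+1}` whose autocorrelations `c_1, …, c_ν` are not all zero, the
Lebesgue measure of `D(h) = {u ∈ [-π, π] : |H(e^{-ju})|² > ‖h‖²}` is at least `C_ν`. -/
theorem measure_Dset_lower_bound (ν : ℕ) (hν : 1 ≤ ν) :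
    ∃ C : ℝ, 0 < C ∧ ∀ h : ℕ → ℂ,
      (∃ k ∈ Finset.Icc 1 ν, ac ν h k ≠ 0) →
      C ≤ (volume (Dset ν h)).toReal := by
  refine ⟨π / (2 * ν), by positivity, fun h ⟨k₁, hk₁, hne⟩ ↦ ?_⟩
  obtain ⟨k₀, hk₀, hmax⟩ := exists_max_image (Icc 1 ν) (‖ac ν h ·‖) ⟨k₁, hk₁⟩
  have hpos : 0 < ‖ac ν h k₀‖ := (norm_pos_iff.2 hne).trans_le (hmax k₁ hk₁)
  have hsum : ∑ k ∈ Icc 1 ν, ‖ac ν h k‖ ≤ ν * ‖ac ν h k₀‖ := by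
    simpa using sum_le_card_nsmul _ _ _ hmax
  have hD : π * ‖ac ν h k₀‖ ≤ 2 * ν * (volume (Dset ν h)).toReal * ‖ac ν h k₀‖ :=
    calc π * ‖ac ν h k₀‖ ≤ 2 * (∑ k ∈ Icc 1 ν, ‖ac ν h k‖) * (volume (Dset ν h)).toReal :=
          pi_mul_norm_ac_le ν h hk₀
      _ ≤ 2 * (ν * ‖ac ν h k₀‖) * (volume (Dset ν h)).toReal := by gcongr
      _ = 2 * ν * (volume (Dset ν h)).toReal * ‖ac ν h k₀‖ := by ring
  rw [div_le_iff₀ (by positivity), mul_comm]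
  exact le_of_mul_le_mul_right hD hpos
end

section
/- For every h = (h_0, …, h_ν) ∈ ℂ^{ν+1} and every u ∈ ℝ, the function f(h, u) = |H(e^{−ju})|² − ‖h‖² satisfies |f(h, u)| ≤ ( 2(2ν+1) Σ_{k=1}^{ν} |c_k|² )^{1/2}, where c_k = Σ_{m=0}^{ν−k} h_m · conj(h_{m+k}). -/
open MeasureTheory Finset

noncomputable def fH (ν : ℕ) (h : ℕ → ℂ) (u : ℝ) : ℝ :=
  ‖Hf ν h u‖ ^ 2 - norm2 ν h

/-!
Expanding `|H(e^{-ju})|² = H · conj H` as a double sum, the diagonal terms give `‖h‖²` and the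
off-diagonal terms, grouped by their lag `k = n - m`, give `2 Re Σ_k c_k e^{jku}`. Hence
`|f(h, u)| ≤ 2 Σ_k |c_k|`, and Cauchy–Schwarz over the `ν` lags bounds the square of this by
`4ν Σ_k |c_k|² ≤ 2(2ν+1) Σ_k |c_k|²`.
-/

open ComplexConjugate

theorem RCLike.sq_norm_sum_range {K : Type*} [RCLike K] (z : ℕ → K) (N : ℕ) :
    ‖∑ m ∈ range N, z m‖ ^ 2 =
      ∑ m ∈ range N, ‖z m‖ ^ 2 +
        2 * RCLike.re (∑ n ∈ range N, ∑ m ∈ range n, z m * conj (z n)) := by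
  induction N with
  | zero => simp
  | succ N ih =>
    simp only [sum_range_succ, ← RCLike.normSq_eq_def', RCLike.normSq_add, ← sum_mul,
      map_add] at ih ⊢
    rw [ih]
    ring

theorem sum_range_sum_range_lt_eq_sum_Icc {M : Type*} [AddCommMonoid M] (N : ℕ) (F : ℕ → ℕ → M) :
    ∑ n ∈ range (N + 1), ∑ m ∈ range n, F m n
      = ∑ k ∈ Icc 1 N, ∑ m ∈ range (N + 1 - k), F m (m + k) := by
  rw [sum_sigma', sum_sigma']
  refine sum_nbij' (fun p ↦ ⟨p.1 - p.2, p.2⟩) (fun p ↦ ⟨p.2 + p.1, p.2⟩) ?_ ?_ ?_ ?_ ?_ <;>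
    rintro ⟨a, b⟩ hp <;> simp only [mem_sigma, mem_range, mem_Icc] at hp ⊢
  all_goals first | omega | (congr 1; omega)

theorem Hf_term_mul_conj (h : ℕ → ℂ) (u : ℝ) (m k : ℕ) :
    h m * Complex.exp (-(Complex.I * m * u)) *
        conj (h (m + k) * Complex.exp (-(Complex.I * (m + k : ℕ) * u))) =
      h m * conj (h (m + k)) * Complex.exp (Complex.I * u * k) := by
  rw [map_mul, ← Complex.exp_conj, mul_mul_mul_comm, ← Complex.exp_add]
  simp only [map_neg, map_mul, Complex.conj_I, Complex.conj_natCast, Complex.conj_ofReal]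
  congr 2
  push_cast
  ring

theorem norm_Hf_term (h : ℕ → ℂ) (u : ℝ) (m : ℕ) :
    ‖h m * Complex.exp (-(Complex.I * m * u))‖ = ‖h m‖ := by
  simp [Complex.norm_exp]

theorem fH_eq_two_mul_re_sum_ac (ν : ℕ) (h : ℕ → ℂ) (u : ℝ) :
    fH ν h u = 2 * (∑ k ∈ Icc 1 ν, ac ν h k * Complex.exp (Complex.I * u * k)).re := by
  rw [fH, Hf, RCLike.sq_norm_sum_range, sum_range_sum_range_lt_eq_sum_Icc]
  simp only [norm_Hf_term, Hf_term_mul_conj, ac, sum_mul, norm2, RCLike.re_to_complex]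
  ring

theorem abs_fH_le_two_mul_sum_norm_ac (ν : ℕ) (h : ℕ → ℂ) (u : ℝ) :
    |fH ν h u| ≤ 2 * ∑ k ∈ Icc 1 ν, ‖ac ν h k‖ := by
  rw [fH_eq_two_mul_re_sum_ac, abs_mul, abs_two]
  gcongr
  refine (Complex.abs_re_le_norm _).trans <|
    (norm_sum_le _ _).trans_eq <| sum_congr rfl fun k _ ↦ ?_
  simp [Complex.norm_exp]

/-- Equation (13), a Cauchy–Schwarz bound: for every `u`,
`|f(h, u)| ≤ (2(2ν+1) Σ_{k=1}^{ν} |c_k|²)^{1/2}`. -/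
theorem fH_cauchy_schwarz_bound (ν : ℕ) (h : ℕ → ℂ) (u : ℝ) :
    |fH ν h u| ≤
      Real.sqrt (2 * (2 * ν + 1) * ∑ k ∈ Finset.Icc 1 ν, ‖ac ν h k‖ ^ 2) := by
  have cauchy_schwarz := sq_sum_le_card_mul_sum_sq (s := Icc 1 ν) (f := fun k ↦ ‖ac ν h k‖)
  rw [Nat.card_Icc, Nat.add_sub_cancel] at cauchy_schwarz
  have sum_sq_nonneg : 0 ≤ ∑ k ∈ Icc 1 ν, ‖ac ν h k‖ ^ 2 := sum_nonneg fun k _ ↦ sq_nonneg _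
  apply Real.abs_le_sqrt
  calc fH ν h u ^ 2 = |fH ν h u| ^ 2 := (sq_abs _).symm
    _ ≤ (2 * ∑ k ∈ Icc 1 ν, ‖ac ν h k‖) ^ 2 := by
        gcongr; exact abs_fH_le_two_mul_sum_norm_ac ν h u
    _ = 4 * (∑ k ∈ Icc 1 ν, ‖ac ν h k‖) ^ 2 := by ring
    _ ≤ 4 * (ν * ∑ k ∈ Icc 1 ν, ‖ac ν h k‖ ^ 2) := by gcongr
    _ ≤ 2 * (2 * ν + 1) * ∑ k ∈ Icc 1 ν, ‖ac ν h k‖ ^ 2 := by nlinarith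
end

section
/- For every h = (h_0, …, h_ν) ∈ ℂ^{ν+1} and every snr > 0, (1/2π) ∫_{−π}^{π} du / ( snr·|H(e^{−ju})|² + 1 ) ≤ 1 − (|D(h)|/2π) · ( 1 − 1/(snr·‖h‖² + 1) ); equivalently, the MMSE decision-point SNR satisfies 1 + γ_mmse(snr, h) ≥ [ 1 − (|D(h)|/2π)·(1 − 1/(snr·‖h‖² + 1)) ]^{−1}. -/
open MeasureTheory Finset

noncomputable def γmmse (ν : ℕ) (snr : ℝ) (h : ℕ → ℂ) : ℝ :=
  ((2 * Real.pi)⁻¹ * ∫ u in (-Real.pi)..Real.pi,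
      (snr * ‖Hf ν h u‖ ^ 2 + 1)⁻¹)⁻¹ - 1

/-! The integrand `(snr·|H|² + 1)⁻¹` is at most `1` everywhere, and on `D(h)`, where
`|H|² > ‖h‖²`, it is at most `c = (snr·‖h‖² + 1)⁻¹`. Splitting `[-π, π]` into `D(h)` and its
complement bounds the integral by `2π - |D(h)|·(1 - c)`. The second inequality follows by
inverting, since the mean of the positive integrand is positive. -/

theorem setIntegral_le_measureReal_sub_of_le_one_of_le_on {α : Type*} [MeasurableSpace α]
    {μ : Measure α} {S D : Set α} {f : α → ℝ} {c : ℝ} (hS : MeasurableSet S) (hSfin : μ S ≠ ⊤)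
    (hD : MeasurableSet D) (hDS : D ⊆ S) (hf : IntegrableOn f S μ)
    (hf_le_one : ∀ x ∈ S, f x ≤ 1) (hf_le_c : ∀ x ∈ D, f x ≤ c) :
    ∫ x in S, f x ∂μ ≤ μ.real S - μ.real D * (1 - c) := by
  have hDfin : μ D ≠ ⊤ := measure_ne_top_of_subset hDS hSfin
  have hon_D : ∫ x in D, f x ∂μ ≤ ∫ _ in D, c ∂μ :=
    setIntegral_mono_on (hf.mono_set hDS) (integrableOn_const hDfin) hD hf_le_c
  have hoff_D : ∫ x in S \ D, f x ∂μ ≤ ∫ _ in S \ D, (1 : ℝ) ∂μ :=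
    setIntegral_mono_on (hf.mono_set Set.sdiff_subset)
      (integrableOn_const (measure_ne_top_of_subset Set.sdiff_subset hSfin)) (hS.diff hD)
      fun x hx => hf_le_one x hx.1
  rw [setIntegral_const, smul_eq_mul] at hon_D hoff_D
  rw [measureReal_sdiff hDS hD] at hoff_D
  rw [← integral_inter_add_sdiff hD hf, Set.inter_eq_right.2 hDS]
  linarith

theorem intervalIntegral_le_sub_of_le_one_of_le_on {a b c : ℝ} {f : ℝ → ℝ} {D : Set ℝ}
    (hab : a ≤ b) (hD : MeasurableSet D) (hDab : D ⊆ Set.Icc a b)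
    (hf : IntegrableOn f (Set.Icc a b)) (hf_le_one : ∀ x ∈ Set.Icc a b, f x ≤ 1)
    (hf_le_c : ∀ x ∈ D, f x ≤ c) :
    ∫ x in a..b, f x ≤ (b - a) - volume.real D * (1 - c) := by
  rw [intervalIntegral.integral_of_le hab, ← integral_Icc_eq_integral_Ioc]
  simpa [Real.volume_real_Icc, hab] using
    setIntegral_le_measureReal_sub_of_le_one_of_le_on measurableSet_Icc
      (by simp [Real.volume_Icc]) hD hDab hf hf_le_one hf_le_c

theorem continuous_Hf (ν : ℕ) (h : ℕ → ℂ) : Continuous (Hf ν h) :=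
  continuous_finsetSum _ fun _ _ => by fun_prop

theorem norm2_nonneg (ν : ℕ) (h : ℕ → ℂ) : 0 ≤ norm2 ν h :=
  Finset.sum_nonneg fun _ _ => by positivity

theorem measurableSet_Dset (ν : ℕ) (h : ℕ → ℂ) : MeasurableSet (Dset ν h) :=
  measurableSet_Icc.inter
    (isOpen_lt continuous_const ((continuous_Hf ν h).norm.pow 2)).measurableSet

theorem Dset_subset_Icc (ν : ℕ) (h : ℕ → ℂ) : Dset ν h ⊆ Set.Icc (-Real.pi) Real.pi :=
  fun _ hu => hu.1

theorem inv_mul_add_one_le_one {snr x : ℝ} (hsnr : 0 ≤ snr) (hx : 0 ≤ x) :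
    (snr * x + 1)⁻¹ ≤ 1 :=
  inv_le_one_of_one_le₀ (le_add_of_nonneg_left (by positivity))

theorem inv_mul_norm_Hf_add_one_le_of_mem_Dset {ν : ℕ} {h : ℕ → ℂ} {snr u : ℝ}
    (hsnr : 0 ≤ snr) (hu : u ∈ Dset ν h) :
    (snr * ‖Hf ν h u‖ ^ 2 + 1)⁻¹ ≤ (snr * norm2 ν h + 1)⁻¹ := by
  have := norm2_nonneg ν h
  exact inv_anti₀ (by positivity) (by gcongr; exact hu.2.le)

/-- Equation (15): for every CIR realization `h` and every `snr > 0`,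
`(1/2π) ∫_{-π}^{π} du/(snr·|H(e^{-ju})|² + 1)
  ≤ 1 - (|D(h)|/2π)(1 - 1/(snr·‖h‖² + 1))`,
equivalently `1 + γ_mmse(snr, h) ≥ [1 - (|D(h)|/2π)(1 - 1/(snr·‖h‖² + 1))]⁻¹`. -/
theorem mmse_snr_lower_bound (ν : ℕ) (h : ℕ → ℂ) (snr : ℝ) (hsnr : 0 < snr) :
    ((2 * Real.pi)⁻¹ * ∫ u in (-Real.pi)..Real.pi,
        (snr * ‖Hf ν h u‖ ^ 2 + 1)⁻¹) ≤
      1 - (volume (Dset ν h)).toReal / (2 * Real.pi) *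
        (1 - (snr * norm2 ν h + 1)⁻¹) ∧
    (1 - (volume (Dset ν h)).toReal / (2 * Real.pi) *
        (1 - (snr * norm2 ν h + 1)⁻¹))⁻¹ ≤ 1 + γmmse ν snr h := by
  have hπ := Real.pi_pos
  have hcont : Continuous fun u => (snr * ‖Hf ν h u‖ ^ 2 + 1)⁻¹ :=
    (((continuous_Hf ν h).norm.pow 2).const_mul snr |>.add continuous_const).inv₀
      fun u => (by positivity : snr * ‖Hf ν h u‖ ^ 2 + 1 ≠ 0)
  have hint := intervalIntegral_le_sub_of_le_one_of_le_on (by linarith)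
    (measurableSet_Dset ν h) (Dset_subset_Icc ν h) hcont.integrableOn_Icc
    (fun u _ => inv_mul_add_one_le_one hsnr.le (by positivity))
    (fun u hu => inv_mul_norm_Hf_add_one_le_of_mem_Dset hsnr.le hu)
  have hmean : (2 * Real.pi)⁻¹ * (∫ u in (-Real.pi)..Real.pi, (snr * ‖Hf ν h u‖ ^ 2 + 1)⁻¹) ≤
      1 - (volume (Dset ν h)).toReal / (2 * Real.pi) * (1 - (snr * norm2 ν h + 1)⁻¹) :=
    calc _ ≤ (2 * Real.pi)⁻¹ * (Real.pi - -Real.pi -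
            (volume (Dset ν h)).toReal * (1 - (snr * norm2 ν h + 1)⁻¹)) := by gcongr; exact hint
      _ = _ := by field_simp; ring
  have hmean_pos : 0 < (2 * Real.pi)⁻¹ *
      ∫ u in (-Real.pi)..Real.pi, (snr * ‖Hf ν h u‖ ^ 2 + 1)⁻¹ :=
    mul_pos (by positivity) (intervalIntegral.intervalIntegral_pos_of_pos
      (hcont.intervalIntegrable _ _) (fun u => by positivity) (by linarith))
  refine ⟨hmean, ?_⟩
  rw [γmmse, add_sub_cancel]
  exact inv_anti₀ hmean_pos hmean
end

section
/- Let μ_1, …, μ_m be complex random variables on a common probability space (possibly dependent) such that each |μ_k|² is exponentially distributed with rate λ_k > 0 (as holds when each μ_k is complex Gaussian), and let B > 0. Then liminf_{snr→∞} log P( Σ_{k=1}^{m} 1/(snr·|μ_k|²) > B ) / log snr ≥ −1; that is, the probability in question is exponentially at least snr^{−1}. -/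
/-!
If `B < (snr · |μ_k|²)⁻¹` for a single `k`, the whole sum exceeds `B`; so the event contains
`{0 < |μ_k|² < (B · snr)⁻¹}`, a set of probability `1 - exp (-λ_k / (B · snr))` (the event
`|μ_k|² = 0` being null). Since `1 - e^{-x} ≥ x / e` on `[0, 1]`, this is at least `c / snr`
with `c = λ_k / (e B)` once `snr ≥ λ_k / B`, so `log P / log snr ≥ log c / log snr - 1 → -1`.
-/

open MeasureTheory Filter

lemma Real.mul_exp_neg_one_le_one_sub_exp_neg {x : ℝ} (hx₀ : 0 ≤ x) (hx₁ : x ≤ 1) :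
    x * Real.exp (-1) ≤ 1 - Real.exp (-x) := by
  have hx : x ≤ Real.exp x - 1 := by linarith [Real.add_one_le_exp x]
  calc x * Real.exp (-1) ≤ (Real.exp x - 1) * Real.exp (-x) := by
        gcongr
        linarith
    _ = 1 - Real.exp (-x) := by rw [sub_mul, ← Real.exp_add]; simp

lemma ae_pos_of_cdf_eq_one_sub_exp {Ω : Type*} [MeasurableSpace Ω] {P : Measure Ω}
    [IsFiniteMeasure P] {X : Ω → ℝ} {lam : ℝ}
    (hexp : ∀ x : ℝ, 0 ≤ x → (P {ω | X ω < x}).toReal = 1 - Real.exp (-(lam * x))) :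
    ∀ᵐ ω ∂P, 0 < X ω := by
  have hcdf : Tendsto (fun x : ℝ => 1 - Real.exp (-(lam * x))) (nhdsWithin 0 (Set.Ioi 0))
      (nhds 0) := by
    have hcont : Continuous (fun x : ℝ => 1 - Real.exp (-(lam * x))) := by fun_prop
    simpa using (hcont.tendsto 0).mono_left nhdsWithin_le_nhds
  have hbound : ∀ᶠ x in nhdsWithin 0 (Set.Ioi 0),
      (P {ω | X ω ≤ 0}).toReal ≤ 1 - Real.exp (-(lam * x)) := by
    filter_upwards [self_mem_nhdsWithin] with x (hx : 0 < x)
    rw [← hexp x hx.le]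
    exact ENNReal.toReal_mono (measure_ne_top _ _)
      (measure_mono fun ω (hω : X ω ≤ 0) => hω.trans_lt hx)
  have hnull : (P {ω | X ω ≤ 0}).toReal = 0 :=
    le_antisymm (ge_of_tendsto hcdf hbound) ENNReal.toReal_nonneg
  rw [ENNReal.toReal_eq_zero_iff, or_iff_left (measure_ne_top _ _)] at hnull
  simpa [ae_iff] using hnull

lemma measure_lt_le_measure_lt_sum_inv {Ω ι : Type*} [MeasurableSpace Ω] [Fintype ι]
    {P : Measure Ω} {X : ι → Ω → ℝ} (hX : ∀ j ω, 0 ≤ X j ω) {k : ι}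
    (hpos : ∀ᵐ ω ∂P, 0 < X k ω) {B snr : ℝ} (hB : 0 < B) (hsnr : 0 < snr) :
    P {ω | X k ω < (B * snr)⁻¹} ≤ P {ω | B < ∑ j, (snr * X j ω)⁻¹} := by
  refine measure_mono_ae ?_
  filter_upwards [hpos] with ω hωpos (hω : X k ω < (B * snr)⁻¹)
  have hterm : B < (snr * X k ω)⁻¹ := by
    rw [lt_inv_comm₀ hB (by positivity)]
    calc snr * X k ω < snr * (B * snr)⁻¹ := by gcongr
      _ = B⁻¹ := by field_simp
  show B < ∑ j, (snr * X j ω)⁻¹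
  exact hterm.trans_le <| Finset.single_le_sum (f := fun j => (snr * X j ω)⁻¹)
    (fun j _ => inv_nonneg.mpr (mul_nonneg hsnr.le (hX j ω))) (Finset.mem_univ k)

lemma neg_one_le_liminf_log_div_log {q : ℝ → ℝ} {c : ℝ} (hc : 0 < c)
    (hlower : ∀ᶠ snr in atTop, c / snr ≤ q snr) (hupper : ∀ᶠ snr in atTop, q snr ≤ 1) :
    -1 ≤ liminf (fun snr => Real.log (q snr) / Real.log snr) atTop := by
  have hbound : Tendsto (fun snr => Real.log c / Real.log snr - 1) atTop (nhds (-1)) := by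
    simpa using (tendsto_const_nhds.div_atTop Real.tendsto_log_atTop).sub_const (1 : ℝ)
  have hle : ∀ᶠ snr in atTop,
      Real.log c / Real.log snr - 1 ≤ Real.log (q snr) / Real.log snr := by
    filter_upwards [hlower, eventually_gt_atTop 1] with snr hq hsnr
    have hlog : 0 < Real.log snr := Real.log_pos hsnr
    calc Real.log c / Real.log snr - 1 = Real.log (c / snr) / Real.log snr := by
          rw [Real.log_div hc.ne' (by positivity)]; field_simp
      _ ≤ Real.log (q snr) / Real.log snr := by gcongr
  have hcobdd : IsCoboundedUnder (· ≥ ·) atTop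
      (fun snr => Real.log (q snr) / Real.log snr) := by
    refine (isBoundedUnder_of_eventually_le (a := 0) ?_).isCoboundedUnder_ge
    filter_upwards [hlower, hupper, eventually_gt_atTop 1] with snr hq₀ hq₁ hsnr
    have hq : 0 ≤ q snr := le_trans (by positivity) hq₀
    exact div_nonpos_of_nonpos_of_nonneg (Real.log_nonpos hq hq₁) (Real.log_pos hsnr).le
  calc (-1 : ℝ) = liminf (fun snr => Real.log c / Real.log snr - 1) atTop :=
        hbound.liminf_eq.symm
    _ ≤ _ := liminf_le_liminf hle hbound.isBoundedUnder_ge hcobdd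

/-- **Lemma 3**: for any (possibly correlated) complex random variables `μ_1, …, μ_m`
whose squared moduli are exponentially distributed (as holds for complex Gaussians) and
any `B > 0`, the probability `P(Σ_k 1/(snr·|μ_k|²) > B)` is exponentially at least
`snr⁻¹`: `liminf_{snr→∞} log P(·)/log snr ≥ -1`. -/
theorem noise_enhancement_prob_lower_bound
    {Ω : Type*} [MeasurableSpace Ω] (P : Measure Ω) [IsProbabilityMeasure P]
    (m : ℕ) (μ : Fin m → Ω → ℂ) (lam : Fin m → ℝ) (hlam : ∀ k, 0 < lam k)
    (hexp : ∀ k, ∀ x : ℝ, 0 ≤ x →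
      (P {ω | ‖μ k ω‖ ^ 2 < x}).toReal = 1 - Real.exp (-(lam k * x)))
    (B : ℝ) (hB : 0 < B) :
    -1 ≤ Filter.liminf (fun snr : ℝ =>
        Real.log (P {ω | B < ∑ k : Fin m, (snr * ‖μ k ω‖ ^ 2)⁻¹}).toReal /
          Real.log snr) atTop := by
  rcases isEmpty_or_nonempty (Fin m) with hm | ⟨⟨k⟩⟩
  · simp [hB.not_gt]
  have hlamk := hlam k
  refine neg_one_le_liminf_log_div_log (c := lam k * Real.exp (-1) / B) (by positivity) ?_
    (Eventually.of_forall fun _ => measureReal_le_one)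
  filter_upwards [eventually_ge_atTop (lam k / B), eventually_gt_atTop 0] with snr hsnr hsnr₀
  have hx₁ : lam k * (B * snr)⁻¹ ≤ 1 := by
    rw [← div_eq_mul_inv, div_le_one (by positivity), ← div_le_iff₀' hB]; exact hsnr
  calc lam k * Real.exp (-1) / B / snr = lam k * (B * snr)⁻¹ * Real.exp (-1) := by
        field_simp
    _ ≤ 1 - Real.exp (-(lam k * (B * snr)⁻¹)) :=
        Real.mul_exp_neg_one_le_one_sub_exp_neg (by positivity) hx₁
    _ = (P {ω | ‖μ k ω‖ ^ 2 < (B * snr)⁻¹}).toReal := (hexp k _ (by positivity)).symm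
    _ ≤ _ := ENNReal.toReal_mono (measure_ne_top _ _) <|
        measure_lt_le_measure_lt_sum_inv (fun j ω => by positivity)
          (ae_pos_of_cdf_eq_one_sub_exp (hexp k)) hB hsnr₀
end
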